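/- arXiv:2404.18101 — 6 statements merged into one kernel-verified Lean document; each statement's English description precedes it below -/
import Mathlib

section
/- Fix λ > 0 and u ∈ ℝ. As the shape parameter a tends to +∞, the wave loss L_{a,λ}(u) converges to the '0–1/λ' loss: the limit of L_{a,λ}(u) as a → +∞ equals 1/λ if u > 0, and equals 0 if u ≤ 0. (In particular, for λ = 1 the pointwise limit is the 0–1 loss.) -/
noncomputable def waveLoss (a lam u : ℝ) : ℝ :=
  (1 / lam) * (1 - 1 / (1 + lam * u ^ 2 * Real.exp (a * u)))

open Filter Topology Real

lemma tendsto_sq_mul_exp_mul_atTop_of_nonpos {u : ℝ} (hu : u ≤ 0) :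
    Tendsto (fun a : ℝ => u ^ 2 * exp (a * u)) atTop (𝓝 0) := by
  rcases hu.lt_or_eq with hu | rfl
  · have hexp : Tendsto (fun a : ℝ => exp (a * u)) atTop (𝓝 0) :=
      tendsto_exp_atBot.comp (tendsto_id.atTop_mul_const_of_neg hu)
    simpa using hexp.const_mul (u ^ 2)
  · simp

lemma tendsto_waveLoss_of_nonpos (lam : ℝ) {u : ℝ} (hu : u ≤ 0) :
    Tendsto (fun a : ℝ => waveLoss a lam u) atTop (𝓝 0) := by
  have hinner : Tendsto (fun a : ℝ => 1 + lam * u ^ 2 * exp (a * u)) atTop (𝓝 1) := by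
    simpa [mul_assoc] using ((tendsto_sq_mul_exp_mul_atTop_of_nonpos hu).const_mul lam).const_add 1
  simpa [waveLoss] using ((hinner.inv₀ one_ne_zero).const_sub 1).const_mul (1 / lam)

lemma tendsto_waveLoss_of_pos {lam u : ℝ} (hlam : 0 < lam) (hu : 0 < u) :
    Tendsto (fun a : ℝ => waveLoss a lam u) atTop (𝓝 (1 / lam)) := by
  have hinner : Tendsto (fun a : ℝ => 1 + lam * u ^ 2 * exp (a * u)) atTop atTop :=
    tendsto_atTop_add_const_left _ 1 <| (tendsto_exp_atTop.comp
      (tendsto_id.atTop_mul_const hu)).const_mul_atTop (by positivity)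
  simpa [waveLoss] using (hinner.inv_tendsto_atTop.const_sub 1).const_mul (1 / lam)

theorem wave_loss_tendsto_zero_one_loss (lam : ℝ) (hlam : 0 < lam) (u : ℝ) :
    Filter.Tendsto (fun a : ℝ => waveLoss a lam u) Filter.atTop
      (nhds (if 0 < u then 1 / lam else 0)) := by
  split_ifs with hu
  · exact tendsto_waveLoss_of_pos hlam hu
  · exact tendsto_waveLoss_of_nonpos lam (not_lt.mp hu)
end

section
/- For every shape parameter a > 0 and bounding parameter λ > 0, the wave loss satisfies lim_{u→+∞} L_{a,λ}(u) = 1/λ and lim_{u→−∞} L_{a,λ}(u) = 0; consequently the supremum of L_{a,λ} over ℝ equals 1/λ, and this supremum is not attained at any u ∈ ℝ. -/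
/-!
The wave loss is `t ↦ t / (1 + λ t)` applied to `u² e^{au}`. For `a > 0` the inner function
tends to `+∞` as `u → +∞` and to `0` as `u → -∞` (exponential decay beats polynomial growth),
while the outer one tends to `1 / λ` at `+∞` and is continuous at `0` with value `0`. Since
`u² e^{au} ≥ 0`, the loss stays strictly below `1 / λ`, and a strict upper bound approached
at `+∞` is a supremum that is not attained.
-/

open Filter Real Set Topology

theorem tendsto_pow_mul_exp_mul_atTop_atTop (n : ℕ) {a : ℝ} (ha : 0 < a) :
    Tendsto (fun u => u ^ n * exp (a * u)) atTop atTop := by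
  have hexp : Tendsto (fun u => exp (a * u)) atTop atTop :=
    tendsto_exp_atTop.comp (tendsto_id.const_mul_atTop ha)
  rcases n.eq_zero_or_pos with rfl | hn
  · simpa using hexp
  · exact (tendsto_pow_atTop hn.ne').atTop_mul_atTop₀ hexp

theorem tendsto_pow_mul_exp_mul_atBot_nhds_zero (n : ℕ) {a : ℝ} (ha : 0 < a) :
    Tendsto (fun u => u ^ n * exp (a * u)) atBot (𝓝 0) := by
  have hneg : Tendsto (fun u : ℝ => (-u) ^ n * exp (-a * -u)) atBot (𝓝 0) := by
    have := (tendsto_rpow_mul_exp_neg_mul_atTop_nhds_zero n a ha).comp tendsto_neg_atBot_atTop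
    simpa only [Function.comp_def, rpow_natCast] using this
  have := hneg.const_mul ((-1) ^ n)
  rw [mul_zero] at this
  refine this.congr fun u => ?_
  rw [← mul_assoc, ← mul_pow]
  ring_nf

/-- `t / (1 + λ t)`, written in the form in which it appears in `waveLoss`. -/
noncomputable def boundedLoss (lam t : ℝ) : ℝ :=
  (1 / lam) * (1 - 1 / (1 + lam * t))

theorem waveLoss_eq_boundedLoss (a lam u : ℝ) :
    waveLoss a lam u = boundedLoss lam (u ^ 2 * exp (a * u)) := by
  rw [waveLoss, boundedLoss, mul_assoc]

theorem boundedLoss_lt {lam t : ℝ} (hlam : 0 < lam) (ht : 0 ≤ t) :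
    boundedLoss lam t < 1 / lam := by
  have : 0 < 1 / (1 + lam * t) := by positivity
  unfold boundedLoss
  nlinarith [one_div_pos.2 hlam]

theorem tendsto_boundedLoss_atTop {lam : ℝ} (hlam : 0 < lam) :
    Tendsto (boundedLoss lam) atTop (𝓝 (1 / lam)) := by
  have h : Tendsto (fun t => (1 + lam * t)⁻¹) atTop (𝓝 0) :=
    (tendsto_atTop_add_const_left _ 1 (tendsto_id.const_mul_atTop hlam)).inv_tendsto_atTop
  have := (tendsto_const_nhds (x := (1 : ℝ)).sub h).const_mul (1 / lam)
  rw [sub_zero, mul_one] at this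
  exact this.congr fun t => by rw [boundedLoss, one_div (1 + lam * t)]

theorem tendsto_boundedLoss_nhds_zero (lam : ℝ) :
    Tendsto (boundedLoss lam) (𝓝 0) (𝓝 0) := by
  have : ContinuousAt (boundedLoss lam) 0 := by
    unfold boundedLoss
    fun_prop (disch := simp)
  simpa [boundedLoss] using this.tendsto

theorem ciSup_eq_of_forall_le_of_tendsto {ι α : Type*} [ConditionallyCompleteLattice α]
    [TopologicalSpace α] [ClosedIicTopology α] {l : Filter ι} [l.NeBot] {f : ι → α} {c : α}
    (hle : ∀ i, f i ≤ c) (hf : Tendsto f l (𝓝 c)) : ⨆ i, f i = c := by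
  have : Nonempty ι := l.nonempty_of_neBot
  have hbdd : BddAbove (range f) := ⟨c, forall_mem_range.2 hle⟩
  exact le_antisymm (ciSup_le hle)
    (le_of_tendsto hf (Eventually.of_forall fun i => le_ciSup hbdd i))

theorem wave_loss_limits_and_sup (a lam : ℝ) (ha : 0 < a) (hlam : 0 < lam) :
    Filter.Tendsto (waveLoss a lam) Filter.atTop (nhds (1 / lam)) ∧
    Filter.Tendsto (waveLoss a lam) Filter.atBot (nhds 0) ∧
    (⨆ u : ℝ, waveLoss a lam u) = 1 / lam ∧
    ∀ u : ℝ, waveLoss a lam u ≠ 1 / lam := by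
  have hcomp : waveLoss a lam = boundedLoss lam ∘ fun u => u ^ 2 * exp (a * u) :=
    funext (waveLoss_eq_boundedLoss a lam)
  have hlt : ∀ u, waveLoss a lam u < 1 / lam := fun u => by
    rw [waveLoss_eq_boundedLoss]
    exact boundedLoss_lt hlam (by positivity)
  have hTop : Tendsto (waveLoss a lam) atTop (𝓝 (1 / lam)) := by
    rw [hcomp]
    exact (tendsto_boundedLoss_atTop hlam).comp (tendsto_pow_mul_exp_mul_atTop_atTop 2 ha)
  have hBot : Tendsto (waveLoss a lam) atBot (𝓝 0) := by
    rw [hcomp]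
    exact (tendsto_boundedLoss_nhds_zero lam).comp (tendsto_pow_mul_exp_mul_atBot_nhds_zero 2 ha)
  exact ⟨hTop, hBot, ciSup_eq_of_forall_le_of_tendsto (fun u => (hlt u).le) hTop,
    fun u => (hlt u).ne⟩
end

section
/- For every shape parameter a ∈ ℝ and bounding parameter λ > 0, the wave loss function L_{a,λ} is not convex on ℝ (i.e., it is not a convex function on the whole real line). -/
open Set Filter Topology

section ConvexBounded

variable {E : Type*} [AddCommGroup E] [Module ℝ E] {f : E → ℝ}

theorem ConvexOn.le_of_bddAbove (hf : ConvexOn ℝ univ f) (hb : BddAbove (range f)) (x y : E) :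
    f y ≤ f x := by
  obtain ⟨M, hM⟩ := hb
  have hbound : ∀ s : ℝ, 0 < s → s ≤ 1 → f y ≤ (1 - s) * f x + s * M := by
    intro s hs0 hs1
    have hy : (1 - s) • x + s • (x + s⁻¹ • (y - x)) = y := by
      rw [smul_add, smul_smul, mul_inv_cancel₀ hs0.ne', one_smul]
      module
    calc f y = f ((1 - s) • x + s • (x + s⁻¹ • (y - x))) := by rw [hy]
      _ ≤ (1 - s) • f x + s • f (x + s⁻¹ • (y - x)) :=
          hf.2 (mem_univ _) (mem_univ _) (by linarith) hs0.le (by ring)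
      _ ≤ (1 - s) * f x + s * M := by
          rw [smul_eq_mul, smul_eq_mul]
          gcongr
          exact hM (mem_range_self _)
  have hlim : Tendsto (fun s : ℝ => (1 - s) * f x + s * M) (𝓝[>] 0) (𝓝 (f x)) := by
    have hcont : Continuous fun s : ℝ => (1 - s) * f x + s * M := by fun_prop
    simpa using (hcont.tendsto 0).mono_left nhdsWithin_le_nhds
  refine ge_of_tendsto hlim ?_
  filter_upwards [Ioo_mem_nhdsGT zero_lt_one] with s hs
  exact hbound s hs.1 hs.2.le

theorem ConvexOn.eq_of_bddAbove (hf : ConvexOn ℝ univ f) (hb : BddAbove (range f)) (x y : E) :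
    f x = f y :=
  le_antisymm (hf.le_of_bddAbove hb y x) (hf.le_of_bddAbove hb x y)

end ConvexBounded

theorem waveLoss_zero (a lam : ℝ) : waveLoss a lam 0 = 0 := by
  simp [waveLoss]

section WaveLoss

variable {a lam : ℝ}

theorem waveLoss_eq (hlam : 0 < lam) (u : ℝ) :
    waveLoss a lam u = u ^ 2 * Real.exp (a * u) / (1 + lam * u ^ 2 * Real.exp (a * u)) := by
  have : 0 < 1 + lam * u ^ 2 * Real.exp (a * u) := by positivity
  rw [waveLoss]
  field_simp
  ring

theorem waveLoss_pos (hlam : 0 < lam) {u : ℝ} (hu : u ≠ 0) : 0 < waveLoss a lam u := by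
  rw [waveLoss_eq hlam]
  positivity

theorem waveLoss_lt (hlam : 0 < lam) (u : ℝ) : waveLoss a lam u < 1 / lam := by
  have hden : 0 < 1 + lam * u ^ 2 * Real.exp (a * u) := by positivity
  have hfrac : 0 < 1 / (1 + lam * u ^ 2 * Real.exp (a * u)) := by positivity
  rw [waveLoss]
  have : 0 < 1 / lam := by positivity
  nlinarith

theorem bddAbove_range_waveLoss (hlam : 0 < lam) : BddAbove (range (waveLoss a lam)) :=
  ⟨1 / lam, forall_mem_range.2 fun u => (waveLoss_lt hlam u).le⟩

end WaveLoss

theorem wave_loss_not_convex (a lam : ℝ) (hlam : 0 < lam) :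
    ¬ ConvexOn ℝ Set.univ (waveLoss a lam) := by
  intro hconv
  have hconst := hconv.eq_of_bddAbove (bddAbove_range_waveLoss hlam) 0 1
  rw [waveLoss_zero] at hconst
  exact (waveLoss_pos hlam one_ne_zero).ne hconst
end

section
/- For every shape parameter a > 0 and bounding parameter λ > 0, the wave loss L_{a,λ} is strictly increasing on (−∞, −2/a] and strictly decreasing on [−2/a, 0]; consequently, on the half-line (−∞, 0] the wave loss attains its maximum value uniquely at the point u = −2/a, where L_{a,λ}(−2/a) = (1/λ)·(1 − 1/(1 + λ·(4/a²)·e^{−2})). -/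
/-!
The wave loss is `t ↦ (1/λ)(1 - 1/(1 + λt))`, a strictly increasing function on `t ≥ 0`,
composed with `g(u) = u² e^{au}`. Since `g'(u) = u(au + 2)e^{au}`, for `a > 0` the function `g`
increases on `(-∞, -2/a]` and decreases on `[-2/a, 0]`, and the wave loss inherits both.
-/

open Real Set

theorem hasDerivAt_sq_mul_exp (a u : ℝ) :
    HasDerivAt (fun u => u ^ 2 * exp (a * u)) (u * (a * u + 2) * exp (a * u)) u := by
  have hexp : HasDerivAt (fun u => exp (a * u)) (exp (a * u) * a) u :=
    ((hasDerivAt_id u).const_mul a).exp.congr_deriv (by simp)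
  exact ((hasDerivAt_pow 2 u).mul hexp).congr_deriv (by ring)

theorem continuous_sq_mul_exp (a : ℝ) : Continuous fun u : ℝ => u ^ 2 * exp (a * u) := by
  fun_prop

theorem strictMonoOn_sq_mul_exp {a : ℝ} (ha : 0 < a) :
    StrictMonoOn (fun u => u ^ 2 * exp (a * u)) (Iic (-2 / a)) := by
  refine strictMonoOn_of_deriv_pos (convex_Iic _) (continuous_sq_mul_exp a).continuousOn ?_
  intro u hu
  rw [interior_Iic] at hu
  have hlin : a * u + 2 < 0 := by
    have := (lt_div_iff₀ ha).mp hu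
    linarith
  have hu0 : u < 0 := by nlinarith
  rw [(hasDerivAt_sq_mul_exp a u).deriv]
  exact mul_pos (mul_pos_of_neg_of_neg hu0 hlin) (exp_pos _)

theorem strictAntiOn_sq_mul_exp {a : ℝ} (ha : 0 < a) :
    StrictAntiOn (fun u => u ^ 2 * exp (a * u)) (Icc (-2 / a) 0) := by
  refine strictAntiOn_of_deriv_neg (convex_Icc _ _) (continuous_sq_mul_exp a).continuousOn ?_
  intro u hu
  rw [interior_Icc] at hu
  have hlin : 0 < a * u + 2 := by
    have := (div_lt_iff₀ ha).mp hu.1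
    linarith
  rw [(hasDerivAt_sq_mul_exp a u).deriv]
  exact mul_neg_of_neg_of_pos (mul_neg_of_neg_of_pos hu.2 hlin) (exp_pos _)

theorem waveLoss_lt_waveLoss {a lam u v : ℝ} (hlam : 0 < lam)
    (h : u ^ 2 * exp (a * u) < v ^ 2 * exp (a * v)) : waveLoss a lam u < waveLoss a lam v := by
  have hpos : 0 < 1 + lam * u ^ 2 * exp (a * u) := by positivity
  have hlt : 1 + lam * u ^ 2 * exp (a * u) < 1 + lam * v ^ 2 * exp (a * v) := by
    nlinarith [mul_lt_mul_of_pos_left h hlam]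
  unfold waveLoss
  gcongr

theorem waveLoss_neg_two_div (a lam : ℝ) (ha : a ≠ 0) :
    waveLoss a lam (-2 / a) = (1 / lam) * (1 - 1 / (1 + lam * (4 / a ^ 2) * exp (-2))) := by
  have hexp : a * (-2 / a) = -2 := by field_simp
  have hsq : (-2 / a) ^ 2 = 4 / a ^ 2 := by rw [div_pow]; norm_num
  rw [waveLoss, hexp, hsq]

theorem StrictMonoOn.lt_of_strictAntiOn {α β : Type*} [LinearOrder α] [Preorder β] {f : α → β}
    {c d x : α} (hmono : StrictMonoOn f (Iic c)) (hanti : StrictAntiOn f (Icc c d))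
    (hxd : x ≤ d) (hxc : x ≠ c) : f x < f c := by
  rcases hxc.lt_or_gt with hlt | hgt
  · exact hmono hlt.le self_mem_Iic hlt
  · exact hanti ⟨le_rfl, hgt.le.trans hxd⟩ ⟨hgt.le, hxd⟩ hgt

theorem wave_loss_negative_halfline (a lam : ℝ) (ha : 0 < a) (hlam : 0 < lam) :
    StrictMonoOn (waveLoss a lam) (Set.Iic (-2 / a)) ∧
    StrictAntiOn (waveLoss a lam) (Set.Icc (-2 / a) 0) ∧
    (∀ u : ℝ, u ≤ 0 → u ≠ -2 / a → waveLoss a lam u < waveLoss a lam (-2 / a)) ∧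
    waveLoss a lam (-2 / a) =
      (1 / lam) * (1 - 1 / (1 + lam * (4 / a ^ 2) * Real.exp (-2))) := by
  have hmono : StrictMonoOn (waveLoss a lam) (Iic (-2 / a)) := fun x hx y hy hxy =>
    waveLoss_lt_waveLoss hlam (strictMonoOn_sq_mul_exp ha hx hy hxy)
  have hanti : StrictAntiOn (waveLoss a lam) (Icc (-2 / a) 0) := fun x hx y hy hxy =>
    waveLoss_lt_waveLoss hlam (strictAntiOn_sq_mul_exp ha hx hy hxy)
  exact ⟨hmono, hanti, fun u hu hne => hmono.lt_of_strictAntiOn hanti hu hne,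
    waveLoss_neg_two_div a lam ha.ne'⟩
end

section
/- For every a ∈ ℝ, λ > 0 and p ∈ [0, 1], the conditional wave-risk g_p(α) = p·L_{a,λ}(1−α) + (1−p)·L_{a,λ}(1+α) is differentiable at α = 0 with derivative g_p'(0) = (1 − 2p)·(a + 2)·e^{a} / (1 + λ·e^{a})². -/
noncomputable def condWaveRisk (a lam p α : ℝ) : ℝ :=
  p * waveLoss a lam (1 - α) + (1 - p) * waveLoss a lam (1 + α)

/-! The wave loss is smooth, with `L'(u) = u (2 + a u) e^{a u} / (1 + λ u² e^{a u})²` by the quotient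
rule, so the chain rule gives `g_p'(0) = (1 - p) L'(1) - p L'(1) = (1 - 2p) L'(1)`. -/

open Real

theorem waveLoss_hasDerivAt (a : ℝ) {lam : ℝ} (hlam : 0 < lam) (u : ℝ) :
    HasDerivAt (waveLoss a lam)
      (u * (2 + a * u) * exp (a * u) / (1 + lam * u ^ 2 * exp (a * u)) ^ 2) u := by
  have hden : 1 + lam * u ^ 2 * exp (a * u) ≠ 0 := by positivity
  have hsq : HasDerivAt (fun v => v ^ 2) (2 * u) u := by simpa using hasDerivAt_pow 2 u
  have hexp : HasDerivAt (fun v => exp (a * v)) (exp (a * u) * a) u := by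
    simpa using ((hasDerivAt_id u).const_mul a).exp
  have hD : HasDerivAt (fun v => 1 + lam * v ^ 2 * exp (a * v))
      (lam * (2 * u * exp (a * u) + u ^ 2 * (exp (a * u) * a))) u := by
    simpa only [Pi.mul_apply, mul_assoc] using ((hsq.mul hexp).const_mul lam).const_add 1
  have hW : waveLoss a lam = fun v => 1 / lam * (1 - (1 + lam * v ^ 2 * exp (a * v))⁻¹) := by
    funext v
    rw [waveLoss, one_div (1 + _)]
  rw [hW]
  refine (((hD.inv hden).const_sub 1).const_mul (1 / lam)).congr_deriv ?_
  field_simp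

theorem condWaveRisk_hasDerivAt {a lam d₁ d₂ α : ℝ} (p : ℝ)
    (h₁ : HasDerivAt (waveLoss a lam) d₁ (1 - α)) (h₂ : HasDerivAt (waveLoss a lam) d₂ (1 + α)) :
    HasDerivAt (condWaveRisk a lam p) ((1 - p) * d₂ - p * d₁) α :=
  (((h₁.comp_const_sub 1 α).const_mul p).add ((h₂.comp_const_add 1 α).const_mul (1 - p))).congr_deriv
    (by ring)

theorem condWaveRisk_hasDerivAt_zero_general (a lam p : ℝ) (hlam : 0 < lam) :
    HasDerivAt (condWaveRisk a lam p)
      ((1 - 2 * p) * (a + 2) * Real.exp a / (1 + lam * Real.exp a) ^ 2) 0 := by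
  have hone : HasDerivAt (waveLoss a lam) ((a + 2) * exp a / (1 + lam * exp a) ^ 2) 1 := by
    simpa [add_comm] using waveLoss_hasDerivAt a hlam 1
  exact (condWaveRisk_hasDerivAt p (α := 0) (by rwa [sub_zero]) (by rwa [add_zero])).congr_deriv
    (by ring)

theorem condWaveRisk_hasDerivAt_zero (a lam p : ℝ) (hlam : 0 < lam)
    (hp : p ∈ Set.Icc (0 : ℝ) 1) :
    HasDerivAt (condWaveRisk a lam p)
      ((1 - 2 * p) * (a + 2) * Real.exp a / (1 + lam * Real.exp a) ^ 2) 0 :=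
  condWaveRisk_hasDerivAt_zero_general a lam p hlam
end

section
/- Let λ > 0 and a > −2. If p ∈ (1/2, 1], then there exists α > 0 with g_p(α) < g_p(0); and if p ∈ [0, 1/2), then there exists α < 0 with g_p(α) < g_p(0). In other words, the zero score is never optimal for the conditional wave-risk when p ≠ 1/2. -/
theorem HasDerivAt.exists_gt_lt_of_neg {f : ℝ → ℝ} {f' x : ℝ} (hf : HasDerivAt f f' x)
    (hf' : f' < 0) : ∃ y, x < y ∧ f y < f x := by
  obtain ⟨t, hslope, ht⟩ :=
    ((hf.tendsto_slope_zero_right.eventually (gt_mem_nhds hf')).and self_mem_nhdsWithin).exists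
  have ht : 0 < t := ht
  refine ⟨x + t, by linarith, ?_⟩
  rw [smul_eq_mul, inv_mul_lt_iff₀ ht] at hslope
  linarith

theorem hasDerivAt_waveLoss (a : ℝ) {lam : ℝ} (hlam : 0 < lam) (u : ℝ) :
    HasDerivAt (waveLoss a lam)
      (Real.exp (a * u) * u * (2 + a * u) / (1 + lam * u ^ 2 * Real.exp (a * u)) ^ 2) u := by
  have hD : HasDerivAt (fun v => 1 + lam * v ^ 2 * Real.exp (a * v))
      (lam * (2 * u) * Real.exp (a * u) + lam * u ^ 2 * (Real.exp (a * u) * a)) u := by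
    have hexp := ((hasDerivAt_id u).const_mul a).exp
    simpa using (((hasDerivAt_pow 2 u).const_mul lam).mul hexp).const_add 1
  have hD_pos : 0 < 1 + lam * u ^ 2 * Real.exp (a * u) := by positivity
  have h := ((hD.inv hD_pos.ne').const_sub 1).const_mul (1 / lam)
  simp only [← one_div] at h
  refine h.congr_deriv ?_
  field_simp

theorem condWaveRisk_neg (a lam p α : ℝ) :
    condWaveRisk a lam p (-α) = condWaveRisk a lam (1 - p) α := by
  simp only [condWaveRisk, sub_neg_eq_add, ← sub_eq_add_neg, sub_sub_cancel]
  ring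

theorem hasDerivAt_condWaveRisk_zero {a lam p L' : ℝ} (hL : HasDerivAt (waveLoss a lam) L' 1) :
    HasDerivAt (condWaveRisk a lam p) ((1 - 2 * p) * L') 0 := by
  have h₁ := HasDerivAt.comp_const_sub (1 : ℝ) 0 (by simpa using hL)
  have h₂ := HasDerivAt.comp_const_add (1 : ℝ) 0 (by simpa using hL)
  exact ((h₁.const_mul p).add (h₂.const_mul (1 - p))).congr_deriv (by ring)

theorem exists_pos_condWaveRisk_lt_zero {a lam p : ℝ} (hlam : 0 < lam) (ha : -2 < a)
    (hp : 1 / 2 < p) : ∃ α : ℝ, 0 < α ∧ condWaveRisk a lam p α < condWaveRisk a lam p 0 := by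
  have hL := hasDerivAt_waveLoss a hlam 1
  simp only [mul_one, one_pow] at hL
  have hL_pos : 0 < Real.exp a * (2 + a) / (1 + lam * Real.exp a) ^ 2 := by
    have : 0 < 2 + a := by linarith
    positivity
  exact (hasDerivAt_condWaveRisk_zero hL).exists_gt_lt_of_neg
    (mul_neg_of_neg_of_pos (by linarith) hL_pos)

theorem zero_score_not_optimal_general (a lam p : ℝ) (hlam : 0 < lam) (ha : -2 < a) :
    (1 / 2 < p → ∃ α : ℝ, 0 < α ∧ condWaveRisk a lam p α < condWaveRisk a lam p 0) ∧
    (p < 1 / 2 → ∃ α : ℝ, α < 0 ∧ condWaveRisk a lam p α < condWaveRisk a lam p 0) := by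
  refine ⟨exists_pos_condWaveRisk_lt_zero hlam ha, fun hp => ?_⟩
  obtain ⟨α, hα, hlt⟩ := exists_pos_condWaveRisk_lt_zero (p := 1 - p) hlam ha (by linarith)
  refine ⟨-α, neg_lt_zero.mpr hα, ?_⟩
  rwa [condWaveRisk_neg, ← neg_zero, condWaveRisk_neg]

theorem zero_score_not_optimal (a lam p : ℝ) (hlam : 0 < lam) (ha : -2 < a)
    (hp : p ∈ Set.Icc (0 : ℝ) 1) :
    (1 / 2 < p → ∃ α : ℝ, 0 < α ∧ condWaveRisk a lam p α < condWaveRisk a lam p 0) ∧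
    (p < 1 / 2 → ∃ α : ℝ, α < 0 ∧ condWaveRisk a lam p α < condWaveRisk a lam p 0) :=
  zero_score_not_optimal_general a lam p hlam ha
end
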